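/- Under the same uniform asymptotic hypothesis f_n(x) = c(x) n^{−5/2} ρ(x)^n (1 + O(1/n)), the variance V(X_n) = f_n''(0)/f_n(0) + f_n'(0)/f_n(0) − (f_n'(0)/f_n(0))² satisfies V(X_n) ∼ n · (ρ''(0)ρ(0) + ρ'(0)ρ(0) − ρ'(0)²)/ρ(0)² as n → ∞, provided ρ''(0)ρ(0) + ρ'(0)ρ(0) − ρ'(0)² > 0. -/

import Mathlib

/-!
Let `V h = h''/h + h'/h - (h'/h)²` at `0`. Since `V h = (log h)'' + (log h)'`, it is additive on
products, vanishes on constants and `V (ρⁿ) = n V ρ`. Dividing `f n` by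
`Φ n = c · n^(-5/2) · ρⁿ` gives holomorphic functions converging uniformly to `1` near `0`, so by
Weierstrass' theorem their first two derivatives tend to `0` and `V (f n / Φ n) → 0`. Hence
`V (f n) = n V ρ + V c + o(1)`.
-/

open Filter Topology

section VarianceRatio

variable {𝕜 : Type*} [NontriviallyNormedField 𝕜]

noncomputable def varianceRatio (h : 𝕜 → 𝕜) (z : 𝕜) : 𝕜 :=
  iteratedDeriv 2 h z / h z + deriv h z / h z - (deriv h z / h z) ^ 2

theorem varianceRatio_eq {h : 𝕜 → 𝕜} {z : 𝕜} (hz : h z ≠ 0) :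
    varianceRatio h z =
      (iteratedDeriv 2 h z * h z + deriv h z * h z - deriv h z ^ 2) / h z ^ 2 := by
  unfold varianceRatio
  field_simp

theorem varianceRatio_congr {h₁ h₂ : 𝕜 → 𝕜} {z : 𝕜} (h : h₁ =ᶠ[𝓝 z] h₂) :
    varianceRatio h₁ z = varianceRatio h₂ z := by
  simp only [varianceRatio, h.iteratedDeriv_eq, h.deriv_eq, h.eq_of_nhds]

@[simp]
theorem varianceRatio_const (a z : 𝕜) : varianceRatio (fun _ => a) z = 0 := by
  simp [varianceRatio, iteratedDeriv_const]

theorem varianceRatio_mul {g h : 𝕜 → 𝕜} {z : 𝕜} (hg : ContDiffAt 𝕜 2 g z)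
    (hh : ContDiffAt 𝕜 2 h z) (hg0 : g z ≠ 0) (hh0 : h z ≠ 0) :
    varianceRatio (g * h) z = varianceRatio g z + varianceRatio h z := by
  have h2 := iteratedDeriv_mul hg hh
  have h1 := iteratedDeriv_mul (hg.of_le one_le_two) (hh.of_le one_le_two)
  simp only [Finset.sum_range_succ, Finset.sum_range_zero, iteratedDeriv_zero,
    iteratedDeriv_one] at h1 h2
  simp only [varianceRatio, h1, h2, Pi.mul_apply]
  norm_num
  field_simp
  ring

theorem varianceRatio_pow {h : 𝕜 → 𝕜} {z : 𝕜} (hh : ContDiffAt 𝕜 2 h z) (hh0 : h z ≠ 0)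
    (n : ℕ) : varianceRatio (fun x => h x ^ n) z = n * varianceRatio h z := by
  induction n with
  | zero => simp
  | succ n ih =>
    have hpow : (fun x => h x ^ (n + 1)) = (fun x => h x ^ n) * h := funext fun x => pow_succ _ _
    rw [hpow, varianceRatio_mul (hh.pow n) hh (pow_ne_zero n hh0) hh0, ih]
    push_cast
    ring

theorem varianceRatio_mul_const_mul_pow {c ρ : 𝕜 → 𝕜} {a z : 𝕜} (n : ℕ)
    (hc : ContDiffAt 𝕜 2 c z) (hρ : ContDiffAt 𝕜 2 ρ z) (hc0 : c z ≠ 0) (ha : a ≠ 0)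
    (hρ0 : ρ z ≠ 0) :
    varianceRatio (fun x => c x * a * ρ x ^ n) z = n * varianceRatio ρ z + varianceRatio c z := by
  have hprod : (fun x => c x * a * ρ x ^ n) = (c * fun _ => a) * fun x => ρ x ^ n := rfl
  rw [hprod, varianceRatio_mul (g := c * fun _ => a) (h := fun x => ρ x ^ n)
      (hc.mul contDiffAt_const) (hρ.pow n) (mul_ne_zero hc0 ha) (pow_ne_zero n hρ0),
    varianceRatio_mul (h := fun _ => a) hc contDiffAt_const hc0 ha,
    varianceRatio_const, varianceRatio_pow hρ hρ0]
  ring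

end VarianceRatio

theorem tendsto_varianceRatio_of_tendstoLocallyUniformlyOn {ι : Type*} {p : Filter ι}
    {F : ι → ℂ → ℂ} {g : ℂ → ℂ} {s : Set ℂ} {z : ℂ} (hs : IsOpen s) (hz : z ∈ s)
    (hFg : TendstoLocallyUniformlyOn F g p s) (hF : ∀ᶠ n in p, DifferentiableOn ℂ (F n) s)
    (hg : g z ≠ 0) :
    Tendsto (fun n => varianceRatio (F n) z) p (𝓝 (varianceRatio g z)) := by
  have h1 := hFg.deriv hF hs
  have h2 := h1.deriv (hF.mono fun n hn => hn.deriv hs) hs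
  have h0 := hFg.tendsto_at hz
  simp only [varianceRatio, iteratedDeriv_succ, iteratedDeriv_zero]
  exact ((h2.tendsto_at hz).div h0 hg |>.add ((h1.tendsto_at hz).div h0 hg)).sub
    (((h1.tendsto_at hz).div h0 hg).pow 2)

theorem tendstoUniformlyOn_div_of_norm_sub_le {α 𝕜 : Type*} [NormedField 𝕜]
    {F Φ : ℕ → α → 𝕜} {s : Set α} {C : ℝ}
    (hΦ : ∀ᶠ n in atTop, ∀ x ∈ s, Φ n x ≠ 0)
    (hF : ∀ᶠ n in atTop, ∀ x ∈ s, ‖F n x - Φ n x‖ ≤ C / n * ‖Φ n x‖) :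
    TendstoUniformlyOn (fun n x => F n x / Φ n x) 1 atTop s := by
  rw [Metric.tendstoUniformlyOn_iff]
  intro ε hε
  filter_upwards [hΦ, hF, (tendsto_const_div_atTop_nhds_zero_nat C).eventually (gt_mem_nhds hε)]
    with n hΦn hFn hCn x hx
  calc dist ((1 : α → 𝕜) x) (F n x / Φ n x) = ‖F n x - Φ n x‖ / ‖Φ n x‖ := by
        rw [dist_comm, dist_eq_norm, Pi.one_apply, div_sub_one (hΦn x hx), norm_div]
    _ ≤ C / n := by rw [div_le_iff₀ (norm_pos_iff.2 (hΦn x hx))]; exact hFn x hx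
    _ < ε := hCn

theorem tendsto_varianceRatio_sub_of_norm_sub_le {f Φ : ℕ → ℂ → ℂ} {s : Set ℂ} {z : ℂ} {C : ℝ}
    (hs : IsOpen s) (hz : z ∈ s) (hf : ∀ n, DifferentiableOn ℂ (f n) s)
    (hΦd : ∀ n, DifferentiableOn ℂ (Φ n) s) (hΦ : ∀ᶠ n in atTop, ∀ x ∈ s, Φ n x ≠ 0)
    (hfΦ : ∀ᶠ n in atTop, ∀ x ∈ s, ‖f n x - Φ n x‖ ≤ C / n * ‖Φ n x‖) :
    Tendsto (fun n => varianceRatio (f n) z - varianceRatio (Φ n) z) atTop (𝓝 0) := by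
  set G : ℕ → ℂ → ℂ := fun n x => f n x / Φ n x
  have hG : TendstoUniformlyOn G 1 atTop s := tendstoUniformlyOn_div_of_norm_sub_le hΦ hfΦ
  have hGd : ∀ᶠ n in atTop, DifferentiableOn ℂ (G n) s := by
    filter_upwards [hΦ] with n hΦn
    exact (hf n).div (hΦd n) hΦn
  have hVG : Tendsto (fun n => varianceRatio (G n) z) atTop (𝓝 0) := by
    simpa [Pi.one_def] using tendsto_varianceRatio_of_tendstoLocallyUniformlyOn hs hz
      hG.tendstoLocallyUniformlyOn hGd one_ne_zero
  refine hVG.congr' ?_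
  filter_upwards [hΦ, hGd, (hG.tendsto_at hz).eventually_ne one_ne_zero] with n hΦn hGn hG0
  have hfG : f n =ᶠ[𝓝 z] Φ n * G n :=
    eventually_of_mem (hs.mem_nhds hz) fun x hx => (mul_div_cancel₀ _ (hΦn x hx)).symm
  have hsmooth {g : ℂ → ℂ} (hg : DifferentiableOn ℂ g s) : ContDiffAt ℂ 2 g z :=
    (hg.analyticAt (hs.mem_nhds hz)).contDiffAt
  rw [varianceRatio_congr hfG,
    varianceRatio_mul (hsmooth (hΦd n)) (hsmooth hGn) (hΦn z hz) hG0]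
  ring

theorem tendsto_nat_mul_add_div_nat_mul {𝕜 : Type*} [RCLike 𝕜] {K b : 𝕜} {e : ℕ → 𝕜}
    (hK : K ≠ 0) (he : Tendsto e atTop (𝓝 b)) :
    Tendsto (fun n : ℕ => (n * K + e n) / (n * K)) atTop (𝓝 1) := by
  have hlim : Tendsto (fun n : ℕ => 1 + e n / K * (n : 𝕜)⁻¹) atTop (𝓝 1) := by
    simpa using ((he.div_const K).mul tendsto_inv_atTop_nhds_zero_nat).const_add (1 : 𝕜)
  refine hlim.congr' ?_
  filter_upwards [eventually_ne_atTop 0] with n hn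
  have : (n : 𝕜) ≠ 0 := Nat.cast_ne_zero.2 hn
  field_simp

theorem stmt8_general (f : ℕ → ℂ → ℂ) (c ρ : ℂ → ℂ) (U : Set ℂ) (hU : U ∈ nhds (0 : ℂ))
    (hf : ∀ n, AnalyticOnNhd ℂ (f n) U)
    (hc : AnalyticAt ℂ c 0) (hρ : AnalyticAt ℂ ρ 0)
    (hc0 : 0 < (c 0).re)
    (hρ0 : 0 < (ρ 0).re)
    (hasym : ∃ C : ℝ, ∀ᶠ n : ℕ in atTop, ∀ x ∈ U,
      ‖f n x - c x * ((n : ℂ) ^ (-(5 : ℂ)/2)) * (ρ x) ^ n‖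
        ≤ (C / n) * ‖c x * ((n : ℂ) ^ (-(5 : ℂ)/2)) * (ρ x) ^ n‖)
    (hKpos : 0 < ((iteratedDeriv 2 ρ 0 * ρ 0 + deriv ρ 0 * ρ 0 - (deriv ρ 0) ^ 2) / (ρ 0) ^ 2).re) :
    Tendsto (fun n : ℕ =>
        (iteratedDeriv 2 (f n) 0 / f n 0 + deriv (f n) 0 / f n 0
            - (deriv (f n) 0 / f n 0) ^ 2)
          / ((n : ℂ) *
            ((iteratedDeriv 2 ρ 0 * ρ 0 + deriv ρ 0 * ρ 0 - (deriv ρ 0) ^ 2) / (ρ 0) ^ 2)))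
      atTop (nhds 1) := by
  have hc0' : c 0 ≠ 0 := fun h => by simp [h] at hc0
  have hρ0' : ρ 0 ≠ 0 := fun h => by simp [h] at hρ0
  rw [← varianceRatio_eq hρ0'] at hKpos ⊢
  have hK : varianceRatio ρ 0 ≠ 0 := fun h => by simp [h] at hKpos
  obtain ⟨C, hC⟩ := hasym
  obtain ⟨s, hs, hs_open, hs0⟩ := eventually_nhds_iff.1 <|
    (show ∀ᶠ z in 𝓝 0, z ∈ U from hU).and <| hc.eventually_analyticAt.and <|
      hρ.eventually_analyticAt.and <|
        (hc.continuousAt.eventually_ne hc0').and (hρ.continuousAt.eventually_ne hρ0')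
  set A : ℕ → ℂ := fun n => (n : ℂ) ^ (-(5 : ℂ)/2)
  have hA : ∀ᶠ n in atTop, A n ≠ 0 := by
    filter_upwards [eventually_ne_atTop 0] with n hn
    simp [A, hn]
  have hΦ : ∀ᶠ n in atTop, ∀ x ∈ s, c x * A n * ρ x ^ n ≠ 0 := by
    filter_upwards [hA] with n hAn x hx
    obtain ⟨-, -, -, hcx, hρx⟩ := hs x hx
    exact mul_ne_zero (mul_ne_zero hcx hAn) (pow_ne_zero n hρx)
  have hΦd (n : ℕ) : DifferentiableOn ℂ (fun x => c x * A n * ρ x ^ n) s := fun x hx => by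
    obtain ⟨-, hcx, hρx, -⟩ := hs x hx
    exact DifferentiableAt.differentiableWithinAt (by fun_prop)
  have hlim := tendsto_varianceRatio_sub_of_norm_sub_le hs_open hs0
    (fun n x hx => (hf n x (hs x hx).1).differentiableWithinAt) hΦd hΦ
    (hC.mono fun n hn x hx => hn x (hs x hx).1)
  refine (tendsto_nat_mul_add_div_nat_mul hK (hlim.const_add (varianceRatio c 0))).congr' ?_
  filter_upwards [hA] with n hAn
  rw [varianceRatio_mul_const_mul_pow n hc.contDiffAt hρ.contDiffAt hc0' hAn hρ0']
  change _ = varianceRatio (f n) 0 / _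
  ring

/-- Under the uniform asymptotics `f_n(x) = c(x) n^{−5/2} ρ(x)^n (1 + O(1/n))`, the
variance `V(X_n) = f_n''(0)/f_n(0) + f_n'(0)/f_n(0) − (f_n'(0)/f_n(0))²` satisfies
`V(X_n) ∼ n (ρ''(0)ρ(0) + ρ'(0)ρ(0) − ρ'(0)²)/ρ(0)²`, provided this constant is positive. -/
theorem stmt8 (f : ℕ → ℂ → ℂ) (c ρ : ℂ → ℂ) (U : Set ℂ) (hU : U ∈ nhds (0 : ℂ))
    (hf : ∀ n, AnalyticOnNhd ℂ (f n) U)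
    (hc : AnalyticAt ℂ c 0) (hρ : AnalyticAt ℂ ρ 0)
    (hc0im : (c 0).im = 0) (hc0 : 0 < (c 0).re)
    (hρ0im : (ρ 0).im = 0) (hρ0 : 0 < (ρ 0).re)
    (hρ1im : (deriv ρ 0).im = 0) (hρ1 : 0 < (deriv ρ 0).re)
    (hasym : ∃ C : ℝ, ∀ᶠ n : ℕ in atTop, ∀ x ∈ U,
      ‖f n x - c x * ((n : ℂ) ^ (-(5 : ℂ)/2)) * (ρ x) ^ n‖
        ≤ (C / n) * ‖c x * ((n : ℂ) ^ (-(5 : ℂ)/2)) * (ρ x) ^ n‖)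
    (hKim : ((iteratedDeriv 2 ρ 0 * ρ 0 + deriv ρ 0 * ρ 0 - (deriv ρ 0) ^ 2) / (ρ 0) ^ 2).im = 0)
    (hKpos : 0 < ((iteratedDeriv 2 ρ 0 * ρ 0 + deriv ρ 0 * ρ 0 - (deriv ρ 0) ^ 2) / (ρ 0) ^ 2).re) :
    Tendsto (fun n : ℕ =>
        (iteratedDeriv 2 (f n) 0 / f n 0 + deriv (f n) 0 / f n 0
            - (deriv (f n) 0 / f n 0) ^ 2)
          / ((n : ℂ) *
            ((iteratedDeriv 2 ρ 0 * ρ 0 + deriv ρ 0 * ρ 0 - (deriv ρ 0) ^ 2) / (ρ 0) ^ 2)))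
      atTop (nhds 1) :=
  stmt8_general f c ρ U hU hf hc hρ hc0 hρ0 hasym hKpos
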